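/- (Rank bound for the LLD solution.) Let X be a real n×p matrix and γ > 0, and suppose (P⋆, C⋆) is an optimal point of the low-leverage decomposition (LLD) program for X with parameter γ. Then rank(P⋆) ≤ n γ². -/

import Mathlib

open Matrix
open scoped BigOperators

/-- The Euclidean (ℓ2) norm of a vector. -/
noncomputable def l2norm {p : ℕ} (u : Fin p → ℝ) : ℝ := Real.sqrt (∑ j, u j ^ 2)

/-- The trace inner product ⟨A, B⟩ = trace(Aᵀ B) on real matrices. -/
def tinner {n p : ℕ} (A B : Matrix (Fin n) (Fin p) ℝ) : ℝ := ∑ i, ∑ j, A i j * B i j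

/-- The spectral norm (ℓ2 → ℓ2 operator norm) of a matrix. -/
noncomputable def norm2to2 {n p : ℕ} (Q : Matrix (Fin n) (Fin p) ℝ) : ℝ :=
  sSup {t : ℝ | ∃ u : Fin p → ℝ, l2norm u ≤ 1 ∧ t = l2norm (Q.mulVec u)}

/-- The nuclear norm, defined as the dual of the spectral norm with respect to
the trace inner product. -/
noncomputable def nuclearNorm {n p : ℕ} (P : Matrix (Fin n) (Fin p) ℝ) : ℝ :=
  sSup {t : ℝ | ∃ A : Matrix (Fin n) (Fin p) ℝ, norm2to2 A ≤ 1 ∧ t = tinner P A}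

/-- The row-sum norm ‖C‖_{2,1}: the sum of the Euclidean norms of the rows. -/
noncomputable def rowSumNorm {n p : ℕ} (C : Matrix (Fin n) (Fin p) ℝ) : ℝ :=
  ∑ i, l2norm (C i)


/-!
Take a compact SVD `P = Uᵀ diag(σ) V` (the rows of `U` and of `V` orthonormal, `σ > 0`). Then
`rank P ≤ #rows of U = ∑ᵢ ℓᵢ`, where `ℓᵢ = ∑ₖ U k i ^ 2` is the leverage score of row `i`, so it
suffices to show `ℓᵢ ≤ γ²`. Move `E = t eᵢ (row i of UᵀV)` from `P` to `C`. This raises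
`γ ‖C‖_{2,1}` by at most `γ t √ℓᵢ`. It lowers `‖P‖_* = ∑ σₖ` by `t ℓᵢ - O(t²)`: the dual matrix
`UᵀV` gives `‖P‖_* ≥ ∑ σₖ`, and splitting `P - E` into the rank-one pieces
`(σₖ uₖ - t uₖᵢ eᵢ) vₖᵀ` bounds `‖P - E‖_*` from above. Optimality then forces
`t ℓᵢ ≤ γ t √ℓᵢ + O(t²)` for all `t > 0`, hence `ℓᵢ ≤ γ √ℓᵢ`.
-/

theorem dotProduct_self_nonneg {ι : Type*} [Fintype ι] (x : ι → ℝ) : 0 ≤ x ⬝ᵥ x :=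
  Fintype.sum_nonneg fun i => mul_self_nonneg (x i)

section L2Norm

variable {p : ℕ}

theorem l2norm_eq_norm (x : Fin p → ℝ) : l2norm x = ‖WithLp.toLp 2 x‖ := by
  simp [l2norm, EuclideanSpace.norm_eq]

theorem l2norm_nonneg (x : Fin p → ℝ) : 0 ≤ l2norm x := Real.sqrt_nonneg _

theorem l2norm_eq_sqrt_dotProduct (x : Fin p → ℝ) : l2norm x = √(x ⬝ᵥ x) := by
  simp [l2norm, dotProduct, sq]

theorem sq_l2norm (x : Fin p → ℝ) : l2norm x ^ 2 = x ⬝ᵥ x := by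
  rw [l2norm_eq_sqrt_dotProduct, Real.sq_sqrt (dotProduct_self_nonneg x)]

theorem dotProduct_le_l2norm_mul (x y : Fin p → ℝ) : x ⬝ᵥ y ≤ l2norm x * l2norm y := by
  simpa [l2norm_eq_norm, EuclideanSpace.inner_toLp_toLp, dotProduct_comm] using
    real_inner_le_norm (WithLp.toLp 2 x) (WithLp.toLp 2 y)

theorem l2norm_add_le (x y : Fin p → ℝ) : l2norm (x + y) ≤ l2norm x + l2norm y := by
  simpa [l2norm_eq_norm] using norm_add_le (WithLp.toLp 2 x) (WithLp.toLp 2 y)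

theorem l2norm_smul (c : ℝ) (x : Fin p → ℝ) : l2norm (c • x) = |c| * l2norm x := by
  simp [l2norm_eq_norm, norm_smul]

theorem l2norm_one_apply (k : Fin p) : l2norm ((1 : Matrix (Fin p) (Fin p) ℝ) k) = 1 := by
  have h : (1 : Matrix (Fin p) (Fin p) ℝ) k = Pi.single k 1 := funext fun j => one_eq_pi_single
  simp [l2norm_eq_sqrt_dotProduct, h]

/-- From `2σ‖x‖ ≤ σ² + ‖x‖²` (AM–GM) and `‖x‖² = σ² - 2σt uᵢ² + t²uᵢ²`. -/
theorem l2norm_smul_sub_smul_single_le {u : Fin p → ℝ} (hu : u ⬝ᵥ u = 1) (i : Fin p) (t : ℝ)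
    {σ : ℝ} (hσ : 0 < σ) :
    l2norm (σ • u - u i • Pi.single i t) ≤ σ - t * u i ^ 2 + t ^ 2 * u i ^ 2 / (2 * σ) := by
  set l := l2norm (σ • u - u i • Pi.single i t)
  have hsq : l ^ 2 = σ ^ 2 - 2 * σ * t * u i ^ 2 + t ^ 2 * u i ^ 2 := by
    simp only [l, sq_l2norm, dotProduct_sub, sub_dotProduct, dotProduct_smul, smul_dotProduct, hu,
      dotProduct_single, single_dotProduct, Pi.sub_apply, Pi.smul_apply, Pi.single_eq_same,
      smul_eq_mul]
    ring
  have hamgm := two_mul_le_add_sq σ l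
  have hgap : σ - t * u i ^ 2 + t ^ 2 * u i ^ 2 / (2 * σ) - l =
      (σ ^ 2 + l ^ 2 - 2 * σ * l) / (2 * σ) := by
    rw [hsq]
    field_simp
    ring
  rw [← sub_nonneg, hgap]
  exact div_nonneg (by linarith) (by positivity)

end L2Norm

section NuclearNorm

variable {n p : ℕ}

theorem norm2to2_eq_opNorm (A : Matrix (Fin n) (Fin p) ℝ) :
    norm2to2 A = ‖LinearMap.toContinuousLinearMap (Matrix.toEuclideanLin A)‖ := by
  rw [← ContinuousLinearMap.sSup_unitClosedBall_eq_norm, norm2to2]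
  congr 1
  ext t
  constructor
  · rintro ⟨x, hx, rfl⟩
    exact ⟨WithLp.toLp 2 x, by simpa [l2norm_eq_norm] using hx, by simp [l2norm_eq_norm]⟩
  · rintro ⟨x, hx, rfl⟩
    exact ⟨x.ofLp, by simpa [l2norm_eq_norm] using hx, by simp [l2norm_eq_norm]; rfl⟩

theorem l2norm_mulVec_le (A : Matrix (Fin n) (Fin p) ℝ) (x : Fin p → ℝ) :
    l2norm (A *ᵥ x) ≤ norm2to2 A * l2norm x := by
  rw [norm2to2_eq_opNorm, l2norm_eq_norm, l2norm_eq_norm]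
  exact (LinearMap.toContinuousLinearMap (Matrix.toEuclideanLin A)).le_opNorm (WithLp.toLp 2 x)

theorem l2norm_mulVec_le_one {A : Matrix (Fin n) (Fin p) ℝ} (hA : norm2to2 A ≤ 1)
    {x : Fin p → ℝ} (hx : l2norm x ≤ 1) : l2norm (A *ᵥ x) ≤ 1 :=
  (l2norm_mulVec_le A x).trans (mul_le_one₀ hA (l2norm_nonneg x) hx)

theorem norm2to2_le_one {A : Matrix (Fin n) (Fin p) ℝ} (h : ∀ x, l2norm (A *ᵥ x) ≤ l2norm x) :
    norm2to2 A ≤ 1 := by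
  rw [norm2to2_eq_opNorm]
  refine ContinuousLinearMap.opNorm_le_bound _ zero_le_one fun x => ?_
  have hx : ‖WithLp.toLp 2 (A *ᵥ x.ofLp)‖ ≤ 1 * ‖x‖ := by
    simpa [l2norm_eq_norm] using h x.ofLp
  exact hx

theorem tinner_eq_trace (A B : Matrix (Fin n) (Fin p) ℝ) : tinner A B = trace (Aᵀ * B) := by
  simp only [tinner, trace, diag, mul_apply, transpose_apply]
  exact Finset.sum_comm

variable {ι : Type*} [Fintype ι]

theorem tinner_transpose_mul (M : Matrix ι (Fin n) ℝ) (V : Matrix ι (Fin p) ℝ)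
    (A : Matrix (Fin n) (Fin p) ℝ) : tinner (Mᵀ * V) A = ∑ k, M k ⬝ᵥ A *ᵥ V k := by
  simp only [tinner, mul_apply, transpose_apply, dotProduct, mulVec, Finset.sum_mul,
    Finset.mul_sum]
  calc _ = ∑ i, ∑ k, ∑ j, M k i * V k j * A i j :=
        Finset.sum_congr rfl fun i _ => Finset.sum_comm
    _ = _ := by
      rw [Finset.sum_comm]
      refine Finset.sum_congr rfl fun k _ => Finset.sum_congr rfl fun i _ => ?_
      exact Finset.sum_congr rfl fun j _ => by ring

theorem tinner_transpose_mul_le (M : Matrix ι (Fin n) ℝ) {V : Matrix ι (Fin p) ℝ}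
    (hV : ∀ k, l2norm (V k) ≤ 1) {A : Matrix (Fin n) (Fin p) ℝ} (hA : norm2to2 A ≤ 1) :
    tinner (Mᵀ * V) A ≤ ∑ k, l2norm (M k) := by
  rw [tinner_transpose_mul]
  gcongr with k
  calc M k ⬝ᵥ A *ᵥ V k ≤ l2norm (M k) * l2norm (A *ᵥ V k) := dotProduct_le_l2norm_mul _ _
    _ ≤ l2norm (M k) :=
      mul_le_of_le_one_right (l2norm_nonneg _) (l2norm_mulVec_le_one hA (hV k))

theorem nuclearNorm_transpose_mul_le (M : Matrix ι (Fin n) ℝ) {V : Matrix ι (Fin p) ℝ}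
    (hV : ∀ k, l2norm (V k) ≤ 1) : nuclearNorm (Mᵀ * V) ≤ ∑ k, l2norm (M k) := by
  refine Real.sSup_le ?_ (Finset.sum_nonneg fun k _ => l2norm_nonneg (M k))
  rintro _ ⟨A, hA, rfl⟩
  exact tinner_transpose_mul_le M hV hA

theorem tinner_le_nuclearNorm (P : Matrix (Fin n) (Fin p) ℝ) {A : Matrix (Fin n) (Fin p) ℝ}
    (hA : norm2to2 A ≤ 1) : tinner P A ≤ nuclearNorm P := by
  have hbdd : BddAbove {t | ∃ A : Matrix (Fin n) (Fin p) ℝ, norm2to2 A ≤ 1 ∧ t = tinner P A} := by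
    refine ⟨∑ j, l2norm (Pᵀ j), ?_⟩
    rintro _ ⟨B, hB, rfl⟩
    -- `P = (Pᵀ)ᵀ * 1` splits `P` into its columns.
    simpa using tinner_transpose_mul_le Pᵀ (fun k => (l2norm_one_apply k).le) hB
  exact le_csSup hbdd ⟨A, hA, rfl⟩

end NuclearNorm

section OrthonormalRows

theorem dotProduct_self_eq_one_of_mul_transpose_eq_one {ι m : Type*} [DecidableEq ι] [Fintype m]
    {V : Matrix ι m ℝ} (hV : V * Vᵀ = 1) (k : ι) : V k ⬝ᵥ V k = 1 := by
  simpa [mul_apply, dotProduct] using congrFun (congrFun hV k) k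

theorem l2norm_eq_one_of_mul_transpose_eq_one {ι : Type*} [DecidableEq ι] {p : ℕ}
    {V : Matrix ι (Fin p) ℝ} (hV : V * Vᵀ = 1) (k : ι) : l2norm (V k) = 1 := by
  rw [l2norm_eq_sqrt_dotProduct, dotProduct_self_eq_one_of_mul_transpose_eq_one hV, Real.sqrt_one]

variable {ι m : Type*} [Fintype ι] [DecidableEq ι] [Fintype m]

theorem dotProduct_transpose_mulVec_self {U : Matrix ι m ℝ} (hU : U * Uᵀ = 1) (y : ι → ℝ) :
    Uᵀ *ᵥ y ⬝ᵥ Uᵀ *ᵥ y = y ⬝ᵥ y := by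
  rw [dotProduct_mulVec, vecMul_transpose, mulVec_mulVec, hU, one_mulVec]

theorem dotProduct_mulVec_self_le {V : Matrix ι m ℝ} (hV : V * Vᵀ = 1) (x : m → ℝ) :
    V *ᵥ x ⬝ᵥ V *ᵥ x ≤ x ⬝ᵥ x := by
  set y := V *ᵥ x
  have hxy : x ⬝ᵥ Vᵀ *ᵥ y = y ⬝ᵥ y := by rw [dotProduct_mulVec, vecMul_transpose]
  have h := dotProduct_self_nonneg (x - Vᵀ *ᵥ y)
  rw [sub_dotProduct, dotProduct_sub, dotProduct_sub, dotProduct_transpose_mulVec_self hV,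
    dotProduct_comm (Vᵀ *ᵥ y) x, hxy] at h
  linarith

end OrthonormalRows

section SVD

variable {m n : Type*} [Fintype m] [Fintype n]

theorem exists_compact_svd_mul_of_isDiag {r : Type*} [Fintype r] [DecidableEq r]
    (Q : Matrix m r ℝ) (W : Matrix r n ℝ) (hQ : (Qᵀ * Q).IsDiag) (hW : W * Wᵀ = 1) :
    ∃ (s : Finset r) (σ : s → ℝ) (U : Matrix s m ℝ) (V : Matrix s n ℝ),
      (∀ k, 0 < σ k) ∧ U * Uᵀ = 1 ∧ V * Vᵀ = 1 ∧ Q * W = Uᵀ * diagonal σ * V := by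
  classical
  set s := Finset.univ.filter fun k => Qᵀ k ≠ 0
  set σ : s → ℝ := fun k => √(Qᵀ k ⬝ᵥ Qᵀ k)
  have hσ : ∀ k, 0 < σ k := fun k => Real.sqrt_pos.mpr <|
    (dotProduct_self_nonneg _).lt_of_ne'
      (dotProduct_self_eq_zero.not.mpr (Finset.mem_filter.mp k.2).2)
  set U : Matrix s m ℝ := of fun k => (σ k)⁻¹ • Qᵀ k
  refine ⟨s, σ, U, W.submatrix (↑) id, hσ, ?_, ?_, ?_⟩
  · ext k l
    have hkl : (U * Uᵀ) k l = (σ k)⁻¹ * (σ l)⁻¹ * (Qᵀ * Q) k l := by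
      simp only [U, mul_apply, transpose_apply, of_apply, Pi.smul_apply, smul_eq_mul,
        Finset.mul_sum]
      exact Finset.sum_congr rfl fun _ _ => by ring
    rw [hkl]
    rcases eq_or_ne k l with rfl | h
    · have hkk : (Qᵀ * Q) k k = σ k ^ 2 := (Real.sq_sqrt (dotProduct_self_nonneg _)).symm
      rw [hkk, one_apply_eq]
      field_simp [(hσ k).ne']
    · rw [hQ (Subtype.val_injective.ne h), one_apply_ne h, mul_zero]
  · rw [transpose_submatrix, ← submatrix_mul _ _ _ _ _ Function.bijective_id, hW,
      submatrix_one _ Subtype.val_injective]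
  · have hUσ : Uᵀ * diagonal σ = Q.submatrix id (↑) := by
      ext i k
      simp only [U, mul_diagonal, transpose_apply, of_apply, Pi.smul_apply, smul_eq_mul,
        submatrix_apply, id]
      field_simp [(hσ k).ne']
    ext i j
    rw [hUσ, mul_apply, mul_apply]
    simp only [submatrix_apply, id]
    rw [Finset.sum_coe_sort s (fun k => Q i k * W k j)]
    refine (Finset.sum_subset (Finset.subset_univ s) fun k _ hk => ?_).symm
    have hQk : Qᵀ k = 0 := by simpa [s] using hk
    rw [← transpose_apply Q k i, hQk, Pi.zero_apply, zero_mul]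

theorem exists_compact_svd [DecidableEq n] (P : Matrix m n ℝ) :
    ∃ (s : Finset n) (σ : s → ℝ) (U : Matrix s m ℝ) (V : Matrix s n ℝ),
      (∀ k, 0 < σ k) ∧ U * Uᵀ = 1 ∧ V * Vᵀ = 1 ∧ P = Uᵀ * diagonal σ * V := by
  have hG : (Pᵀ * P).IsHermitian := by
    simpa using isHermitian_conjTranspose_mul_self P
  set O : Matrix n n ℝ := (hG.eigenvectorUnitary : Matrix n n ℝ)
  have hO : star O = Oᵀ := by simp [star_eq_conjTranspose]
  have hO₁ : Oᵀ * O = 1 := hO ▸ Unitary.coe_star_mul_self hG.eigenvectorUnitary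
  have hO₂ : O * Oᵀ = 1 := hO ▸ Unitary.coe_mul_star_self hG.eigenvectorUnitary
  have hdiag : ((P * O)ᵀ * (P * O)).IsDiag := by
    have h := hG.conjStarAlgAut_star_eigenvectorUnitary
    rw [Unitary.conjStarAlgAut_star_apply] at h
    rw [transpose_mul, Matrix.mul_assoc, ← Matrix.mul_assoc Pᵀ, ← Matrix.mul_assoc, ← hO]
    exact h ▸ isDiag_diagonal _
  obtain ⟨s, σ, U, V, hσ, hU, hV, h⟩ :=
    exists_compact_svd_mul_of_isDiag (P * O) Oᵀ hdiag (by rwa [transpose_transpose])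
  exact ⟨s, σ, U, V, hσ, hU, hV, by rw [← h, Matrix.mul_assoc, hO₂, Matrix.mul_one]⟩

end SVD

def leverage {ι m : Type*} [Fintype ι] (U : Matrix ι m ℝ) (i : m) : ℝ := ∑ k, U k i ^ 2

theorem dotProduct_self_transpose_apply {ι m : Type*} [Fintype ι] (U : Matrix ι m ℝ) (i : m) :
    Uᵀ i ⬝ᵥ Uᵀ i = leverage U i := by
  simp [leverage, dotProduct, sq]

theorem sum_leverage {ι m : Type*} [Fintype ι] [DecidableEq ι] [Fintype m] {U : Matrix ι m ℝ}
    (hU : U * Uᵀ = 1) : ∑ i, leverage U i = Fintype.card ι := by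
  have hrow : ∀ k, ∑ i, U k i ^ 2 = 1 := fun k => by
    simpa [dotProduct, sq] using dotProduct_self_eq_one_of_mul_transpose_eq_one hU k
  simp only [leverage]
  rw [Finset.sum_comm]
  simp [hrow]

theorem rowSumNorm_add_le {n p : ℕ} (A B : Matrix (Fin n) (Fin p) ℝ) :
    rowSumNorm (A + B) ≤ rowSumNorm A + rowSumNorm B := by
  rw [rowSumNorm, rowSumNorm, rowSumNorm, ← Finset.sum_add_distrib]
  exact Finset.sum_le_sum fun i _ => l2norm_add_le (A i) (B i)

theorem rowSumNorm_vecMulVec {n p : ℕ} (a : Fin n → ℝ) (d : Fin p → ℝ) :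
    rowSumNorm (vecMulVec a d) = (∑ i, |a i|) * l2norm d := by
  have hrow : ∀ i, vecMulVec a d i = a i • d := fun i => funext fun j => vecMulVec_apply a d i j
  simp only [rowSumNorm, hrow, l2norm_smul, Finset.sum_mul]

theorem le_of_forall_pos_le_add_mul {a b c : ℝ} (h : ∀ t > 0, a ≤ b + t * c) : a ≤ b := by
  refine le_of_forall_pos_le_add fun ε hε => ?_
  calc a ≤ b + ε / (|c| + 1) * c := h _ (by positivity)
    _ ≤ b + ε := by
      rw [div_mul_eq_mul_div, add_le_add_iff_left, div_le_iff₀ (by positivity)]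
      nlinarith [le_abs_self c]

section Perturbation

variable {n p : ℕ} {ι : Type*} [Fintype ι] [DecidableEq ι] {σ : ι → ℝ}
  {U : Matrix ι (Fin n) ℝ} {V : Matrix ι (Fin p) ℝ}

theorem sum_le_nuclearNorm (hU : U * Uᵀ = 1) (hV : V * Vᵀ = 1) :
    ∑ k, σ k ≤ nuclearNorm (Uᵀ * diagonal σ * V) := by
  have hA : norm2to2 (Uᵀ * V) ≤ 1 := norm2to2_le_one fun x => by
    rw [l2norm_eq_sqrt_dotProduct, l2norm_eq_sqrt_dotProduct, ← mulVec_mulVec,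
      dotProduct_transpose_mulVec_self hU]
    exact Real.sqrt_le_sqrt (dotProduct_mulVec_self_le hV x)
  calc ∑ k, σ k = tinner (Uᵀ * diagonal σ * V) (Uᵀ * V) := by
        rw [tinner_eq_trace, transpose_mul, transpose_mul, transpose_transpose, diagonal_transpose]
        simp only [Matrix.mul_assoc]
        rw [← Matrix.mul_assoc U, hU, Matrix.one_mul, trace_mul_comm, Matrix.mul_assoc, hV,
          Matrix.mul_one, trace_diagonal]
    _ ≤ _ := tinner_le_nuclearNorm _ hA

theorem nuclearNorm_sub_vecMulVec_le (hσ : ∀ k, 0 < σ k) (hU : U * Uᵀ = 1) (hV : V * Vᵀ = 1)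
    (i : Fin n) (t : ℝ) :
    nuclearNorm (Uᵀ * diagonal σ * V - vecMulVec (Pi.single i t) (Uᵀ i ᵥ* V)) ≤
      ∑ k, σ k - t * leverage U i + t ^ 2 / 2 * ∑ k, U k i ^ 2 / σ k := by
  set M := diagonal σ * U - vecMulVec (Uᵀ i) (Pi.single i t)
  have hM : Uᵀ * diagonal σ * V - vecMulVec (Pi.single i t) (Uᵀ i ᵥ* V) = Mᵀ * V := by
    rw [transpose_sub, transpose_mul, diagonal_transpose, transpose_vecMulVec, Matrix.sub_mul,
      vecMulVec_mul]
  have hMk : ∀ k, M k = σ k • U k - U k i • Pi.single i t := fun k => by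
    ext j
    simp [M, diagonal_mul, vecMulVec_apply]
  rw [hM]
  refine (nuclearNorm_transpose_mul_le M
    fun k => (l2norm_eq_one_of_mul_transpose_eq_one hV k).le).trans ?_
  calc ∑ k, l2norm (M k) ≤ ∑ k, (σ k - t * U k i ^ 2 + t ^ 2 * U k i ^ 2 / (2 * σ k)) := by
        gcongr with k
        rw [hMk]
        exact l2norm_smul_sub_smul_single_le
          (dotProduct_self_eq_one_of_mul_transpose_eq_one hU k) i t (hσ k)
    _ = _ := by
        simp only [leverage, Finset.sum_add_distrib, Finset.sum_sub_distrib, Finset.mul_sum]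
        congr 1
        exact Finset.sum_congr rfl fun k _ => by ring

theorem leverage_le_sq_of_optimal {C : Matrix (Fin n) (Fin p) ℝ} {γ : ℝ} (hγ : 0 ≤ γ)
    (hσ : ∀ k, 0 < σ k) (hU : U * Uᵀ = 1) (hV : V * Vᵀ = 1)
    (hopt : ∀ E, nuclearNorm (Uᵀ * diagonal σ * V) + γ * rowSumNorm C ≤
      nuclearNorm (Uᵀ * diagonal σ * V - E) + γ * rowSumNorm (C + E))
    (i : Fin n) : leverage U i ≤ γ ^ 2 := by
  set ℓ := leverage U i
  have hℓ : 0 ≤ ℓ := Finset.sum_nonneg fun _ _ => sq_nonneg _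
  set s := ∑ k, U k i ^ 2 / σ k
  have hdir : ∀ t > 0, ℓ ≤ γ * √ℓ + t * (s / 2) := by
    intro t ht
    set E := vecMulVec (Pi.single i t) (Uᵀ i ᵥ* V)
    have hE : rowSumNorm E = t * √ℓ := by
      rw [rowSumNorm_vecMulVec, l2norm_eq_sqrt_dotProduct, ← mulVec_transpose,
        dotProduct_transpose_mulVec_self hV, dotProduct_self_transpose_apply]
      simp [Pi.single_apply, apply_ite, abs_of_pos ht, ℓ]
    have h1 := hopt E
    have h2 := sum_le_nuclearNorm (σ := σ) hU hV
    have h3 := nuclearNorm_sub_vecMulVec_le hσ hU hV i t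
    have h4 := mul_le_mul_of_nonneg_left ((rowSumNorm_add_le C E).trans_eq (by rw [hE])) hγ
    have h5 : t * ℓ ≤ t * (γ * √ℓ + t * (s / 2)) := by linarith
    exact le_of_mul_le_mul_left h5 ht
  have h := le_of_forall_pos_le_add_mul hdir
  nlinarith [Real.sq_sqrt hℓ, Real.sqrt_nonneg ℓ, sq_nonneg (γ - √ℓ)]

end Perturbation

theorem lld_rank_bound {n p : ℕ} (X P C : Matrix (Fin n) (Fin p) ℝ)
    (γ : ℝ) (hγ : 0 < γ) (hPC : P + C = X)
    (hopt : ∀ P' C' : Matrix (Fin n) (Fin p) ℝ, P' + C' = X →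
      nuclearNorm P + γ * rowSumNorm C ≤ nuclearNorm P' + γ * rowSumNorm C') :
    (P.rank : ℝ) ≤ n * γ ^ 2 := by
  obtain ⟨s, σ, U, V, hσ, hU, hV, rfl⟩ := exists_compact_svd P
  have hperturb : ∀ E, nuclearNorm (Uᵀ * diagonal σ * V) + γ * rowSumNorm C ≤
      nuclearNorm (Uᵀ * diagonal σ * V - E) + γ * rowSumNorm (C + E) :=
    fun E => hopt _ _ (by rw [← hPC]; abel)
  calc ((Uᵀ * diagonal σ * V).rank : ℝ) ≤ Fintype.card s := by
        exact_mod_cast (rank_mul_le_right _ _).trans (rank_le_card_height V)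
    _ = ∑ i, leverage U i := (sum_leverage hU).symm
    _ ≤ ∑ _i : Fin n, γ ^ 2 :=
        Finset.sum_le_sum fun i _ => leverage_le_sq_of_optimal hγ.le hσ hU hV hperturb i
    _ = n * γ ^ 2 := by simp
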